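/- Define fA (x₁, x₂) = (−x₁/8 − x₂, 2x₁ − x₂/8) and fB (x₁, x₂) = (−x₁/8 − 2x₂, x₁ − x₂/8) on ℝ × ℝ. The origin is NOT stable under arbitrary switching between fA and fB: there exists ε > 0 such that for every δ > 0 there exist ω with ‖ω‖ < δ and a state ν reachable from ω in the reflexive-transitive closure of the union of the fA-flow relation and the fB-flow relation (with trivial domains) satisfying ‖ν‖ ≥ ε. -/

import Mathlib

/-- The vector field `fA (x₁, x₂) = (−x₁/8 − x₂, 2x₁ − x₂/8)`. -/
noncomputable def fA (x : ℝ × ℝ) : ℝ × ℝ := (-x.1 / 8 - x.2, 2 * x.1 - x.2 / 8)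

/-- The vector field `fB (x₁, x₂) = (−x₁/8 − 2x₂, x₁ − x₂/8)`. -/
noncomputable def fB (x : ℝ × ℝ) : ℝ × ℝ := (-x.1 / 8 - 2 * x.2, x.1 - x.2 / 8)

/-- The flow relation for a vector field `g` on `ℝ × ℝ` (trivial domain). -/
def FlowRel (g : ℝ × ℝ → ℝ × ℝ) (ω ν : ℝ × ℝ) : Prop :=
  ∃ t : ℝ, 0 ≤ t ∧ ∃ φ : ℝ → ℝ × ℝ, φ 0 = ω ∧ φ t = ν ∧
    ∀ s ∈ Set.Icc (0 : ℝ) t, HasDerivWithinAt φ (g (φ s)) (Set.Icc (0 : ℝ) t) s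

/-- The Euclidean norm on `ℝ × ℝ`. -/
noncomputable def enorm2 (x : ℝ × ℝ) : ℝ := Real.sqrt (x.1 ^ 2 + x.2 ^ 2)

/-!
Both fields are damped rotations `x' = -x/8 + J x` with angular frequency `√2`, along ellipses
whose long axes are swapped. A quarter turn of `fA` carries the `x₁`-axis to the `x₂`-axis stretching by
`√2`, and a quarter turn of `fB` carries it back stretching by `√2` again, while the damping over a
quarter period `π / (2√2)` costs only `exp (-π / (16√2))`. Alternating them multiplies a state on the
`x₁`-axis by `-2 exp (-π / (8√2))`, of modulus `> 1`, so arbitrarily small states reach norm `1`.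
-/

open Real

theorem Relation.ReflTransGen.pow_mul_of_mul {α M : Type*} [Monoid M] {R : α → α → Prop} (v : M → α)
    {μ : M} (h : ∀ c, Relation.ReflTransGen R (v c) (v (μ * c))) (n : ℕ) (c : M) :
    Relation.ReflTransGen R (v c) (v (μ ^ n * c)) := by
  induction n generalizing c with
  | zero => rw [pow_zero, one_mul]
  | succ n ih => simpa only [pow_succ, mul_assoc] using (h c).trans (ih (μ * c))

theorem flowRel_of_hasDerivAt {g : ℝ × ℝ → ℝ × ℝ} {φ : ℝ → ℝ × ℝ}
    (hφ : ∀ s, HasDerivAt φ (g (φ s)) s) {t : ℝ} (ht : 0 ≤ t) : FlowRel g (φ 0) (φ t) :=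
  ⟨t, ht, φ, rfl, rfl, fun s _ => (hφ s).hasDerivWithinAt⟩

def spiralField (a p q : ℝ) (x : ℝ × ℝ) : ℝ × ℝ := (-a * x.1 - p * x.2, q * x.1 - a * x.2)

noncomputable def spiralFlow (a p q : ℝ) (x : ℝ × ℝ) (s : ℝ) : ℝ × ℝ :=
  exp (-a * s) • (x.1 * cos (√(p * q) * s) - p / √(p * q) * x.2 * sin (√(p * q) * s),
    x.2 * cos (√(p * q) * s) + q / √(p * q) * x.1 * sin (√(p * q) * s))

theorem spiralFlow_zero (a p q : ℝ) (x : ℝ × ℝ) : spiralFlow a p q x 0 = x := by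
  simp [spiralFlow]

theorem hasDerivAt_spiralFlow {a p q : ℝ} (hpq : 0 < p * q) (x : ℝ × ℝ) (s : ℝ) :
    HasDerivAt (spiralFlow a p q x) (spiralField a p q (spiralFlow a p q x s)) s := by
  set ω := √(p * q)
  have hω0 : ω ≠ 0 := (sqrt_pos.2 hpq).ne'
  have hω : p * q / ω = ω := by rw [div_eq_iff hω0, mul_self_sqrt hpq.le]
  have hωω : ω * ω⁻¹ = 1 := mul_inv_cancel₀ hω0
  have hlin : HasDerivAt (fun s => ω * s) ω s := by simpa using (hasDerivAt_id s).const_mul ω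
  have hexp : HasDerivAt (fun s => exp (-a * s)) (exp (-a * s) * -a) s := by
    simpa using ((hasDerivAt_id s).const_mul (-a)).exp
  have h1 := (hlin.cos.const_mul x.1).sub (hlin.sin.const_mul (p / ω * x.2))
  have h2 := (hlin.cos.const_mul x.2).add (hlin.sin.const_mul (q / ω * x.1))
  refine (hexp.smul (h1.prodMk h2)).congr_deriv ?_
  ext <;> simp only [spiralField, spiralFlow, Prod.smul_mk, smul_eq_mul, Prod.mk_add_mk,
    Pi.add_apply, Pi.sub_apply]
  · linear_combination exp (-a * s) * (x.1 * sin (ω * s) * hω - p * x.2 * cos (ω * s) * hωω)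
  · linear_combination exp (-a * s) * (x.2 * sin (ω * s) * hω + q * x.1 * cos (ω * s) * hωω)

theorem spiralFlow_quarter_turn {a p q : ℝ} (hpq : 0 < p * q) (x : ℝ × ℝ) :
    spiralFlow a p q x (π / 2 / √(p * q)) =
      exp (-a * (π / 2 / √(p * q))) • (-(p / √(p * q) * x.2), q / √(p * q) * x.1) := by
  rw [spiralFlow, mul_div_cancel₀ _ (sqrt_pos.2 hpq).ne', cos_pi_div_two, sin_pi_div_two]
  simp only [mul_zero, mul_one, zero_sub, zero_add]

theorem flowRel_spiralFlow {a p q : ℝ} (hpq : 0 < p * q) (x : ℝ × ℝ) {t : ℝ} (ht : 0 ≤ t) :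
    FlowRel (spiralField a p q) x (spiralFlow a p q x t) := by
  simpa only [spiralFlow_zero] using flowRel_of_hasDerivAt (hasDerivAt_spiralFlow hpq x) ht

theorem fA_eq_spiralField : fA = spiralField (1 / 8) 1 2 := by
  ext x <;> simp only [fA, spiralField] <;> ring

theorem fB_eq_spiralField : fB = spiralField (1 / 8) 2 1 := by
  ext x <;> simp only [fB, spiralField] <;> ring

/-- `2 / √2` times the damping `exp (-t / 8)` over the quarter period `t = π / (2√2)`. -/
noncomputable def quarterTurnGain : ℝ := √2 * exp (-(π / (16 * √2)))

theorem one_lt_quarterTurnGain : 1 < quarterTurnGain := by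
  have hs : 1.4 < √2 := by rw [lt_sqrt (by norm_num)]; norm_num
  have hexp := add_one_le_exp (-(π / (16 * √2)))
  have hπ := pi_lt_d2
  calc (1 : ℝ) < √2 - π / 16 := by linarith
    _ = √2 * (-(π / (16 * √2)) + 1) := by field_simp; ring
    _ ≤ quarterTurnGain := by unfold quarterTurnGain; gcongr

theorem flowRel_fA_quarter_turn (c : ℝ) : FlowRel fA (c, 0) (0, quarterTurnGain * c) := by
  have h := flowRel_spiralFlow (a := 1 / 8) (by norm_num : (0 : ℝ) < 1 * 2) (c, 0)
    (by positivity : 0 ≤ π / 2 / √(1 * 2))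
  rw [spiralFlow_quarter_turn (by norm_num), ← fA_eq_spiralField] at h
  convert h using 1
  ext <;> simp only [quarterTurnGain, one_div, one_mul, neg_mul, mul_zero, neg_zero, div_sqrt,
    Prod.smul_mk, smul_eq_mul]
  ring_nf

theorem flowRel_fB_quarter_turn (d : ℝ) : FlowRel fB (0, d) (-(quarterTurnGain * d), 0) := by
  have h := flowRel_spiralFlow (a := 1 / 8) (by norm_num : (0 : ℝ) < 2 * 1) (0, d)
    (by positivity : 0 ≤ π / 2 / √(2 * 1))
  rw [spiralFlow_quarter_turn (by norm_num), ← fB_eq_spiralField] at h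
  convert h using 1
  ext <;> simp only [quarterTurnGain, one_div, mul_one, neg_mul, mul_neg, mul_zero, neg_inj, div_sqrt,
    Prod.smul_mk, smul_eq_mul]
  ring_nf

theorem reflTransGen_switching_half_turn (c : ℝ) :
    Relation.ReflTransGen (fun a b => FlowRel fA a b ∨ FlowRel fB a b)
      (c, 0) (-quarterTurnGain ^ 2 * c, 0) := by
  have hB := flowRel_fB_quarter_turn (quarterTurnGain * c)
  rw [← mul_assoc, ← sq, ← neg_mul] at hB
  exact .tail (.single (.inl (flowRel_fA_quarter_turn c))) (.inr hB)

theorem enorm2_mk_zero (c : ℝ) : enorm2 (c, 0) = |c| := by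
  simp [enorm2, sqrt_sq_eq_abs]

theorem origin_not_stable_arbitrary_switching :
    ∃ ε : ℝ, 0 < ε ∧
      ∀ δ : ℝ, 0 < δ →
        ∃ ω : ℝ × ℝ, enorm2 ω < δ ∧
          ∃ ν : ℝ × ℝ,
            Relation.ReflTransGen (fun a b => FlowRel fA a b ∨ FlowRel fB a b) ω ν ∧
            ε ≤ enorm2 ν := by
  refine ⟨1, one_pos, fun δ hδ => ?_⟩
  have hgain : 1 < quarterTurnGain ^ 2 := one_lt_pow₀ one_lt_quarterTurnGain two_ne_zero
  obtain ⟨n, hn⟩ := pow_unbounded_of_one_lt (2 / δ) hgain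
  refine ⟨(δ / 2, 0), ?_, ((-quarterTurnGain ^ 2) ^ n * (δ / 2), 0),
    .pow_mul_of_mul (fun c => (c, 0)) reflTransGen_switching_half_turn n (δ / 2), ?_⟩
  · rw [enorm2_mk_zero, abs_of_pos (half_pos hδ)]
    exact half_lt_self hδ
  · rw [enorm2_mk_zero, abs_mul, abs_pow, abs_neg, abs_of_pos (by positivity),
      abs_of_pos (half_pos hδ)]
    rw [div_lt_iff₀ hδ] at hn
    linarith
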